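/- Let X be a Peano continuum and x an endpoint of X. Then x is not a local cut point of X. -/
import Mathlib


open Set Topology

/-- `x` is an endpoint: it has a neighborhood basis of open sets whose boundaries
are single points. -/
def IsEndpoint {X : Type*} [TopologicalSpace X] (x : X) : Prop :=
  ∀ U ∈ 𝓝 x, ∃ V : Set X, IsOpen V ∧ x ∈ V ∧ V ⊆ U ∧ ∃ p, frontier V = {p}

def IsLocalCutPoint {X : Type*} [TopologicalSpace X] (x : X) : Prop :=
  ∃ U : Set X, IsOpen U ∧ x ∈ U ∧ IsConnected U ∧ ¬ IsPreconnected (U \ {x})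

/-- If `U` is preconnected, `x ∈ U`, and `U \ {x}` is split by disjoint open sets
`A` and `B`, then `A ∪ {x}` is preconnected. -/
lemma sep_union_singleton_preconnected {X : Type*} [TopologicalSpace X]
    {U A B : Set X} {x : X}
    (hU : IsPreconnected U) (hxU : x ∈ U) (hA : IsOpen A) (hB : IsOpen B)
    (hUn : U \ {x} = A ∪ B) (hd : A ∩ B = ∅) : IsPreconnected (A ∪ {x}) := by
  have hAU : A ⊆ U := fun z hz => by
    have : z ∈ U \ {x} := hUn.symm ▸ (Or.inl hz)
    exact this.1
  have key : ∀ u v : Set X, IsOpen u → IsOpen v → (A ∪ {x}) ⊆ u ∪ v → x ∈ u →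
      ((A ∪ {x}) ∩ v).Nonempty → ((A ∪ {x}) ∩ (u ∩ v)).Nonempty := by
    rintro u v hu hv hcov hxu ⟨b, hbA, hbv⟩
    rcases hbA with hbA | hbx
    · have h1 : U ⊆ (A ∩ v) ∪ (u ∪ B) := by
        intro y hy
        by_cases hyx : y = x
        · subst hyx; exact Or.inr (Or.inl hxu)
        · have hyAB : y ∈ A ∪ B := hUn ▸ ⟨hy, hyx⟩
          rcases hyAB with hyA | hyB
          · rcases hcov (Or.inl hyA) with hyu | hyv
            · exact Or.inr (Or.inl hyu)
            · exact Or.inl ⟨hyA, hyv⟩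
          · exact Or.inr (Or.inr hyB)
      have h2 := hU (A ∩ v) (u ∪ B) (hA.inter hv) (hu.union hB) h1
        ⟨b, hAU hbA, hbA, hbv⟩ ⟨x, hxU, Or.inl hxu⟩
      obtain ⟨y, _, ⟨hyA, hyv⟩, hyub⟩ := h2
      have hyu : y ∈ u := by
        rcases hyub with hyu | hyB
        · exact hyu
        · exact (eq_empty_iff_forall_notMem.mp hd y ⟨hyA, hyB⟩).elim
      exact ⟨y, Or.inl hyA, hyu, hyv⟩
    · rcases hbx with rfl
      exact ⟨b, Or.inr rfl, hxu, hbv⟩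
  intro u v hu hv hcov ⟨a, ha⟩ ⟨b, hb⟩
  have hxuv : x ∈ u ∪ v := hcov (Or.inr rfl)
  rcases hxuv with hxu | hxv
  · exact key u v hu hv hcov hxu ⟨b, hb⟩
  · have h := key v u hv hu (fun z hz => (hcov hz).symm) hxv ⟨a, ha⟩
    rwa [inter_comm v u] at h

/-- A preconnected set meeting an open set `V` and the complement of its closure
must meet the frontier of `V`. -/
lemma preconnected_inter_frontier_nonempty {X : Type*} [TopologicalSpace X]
    {s V : Set X} (hs : IsPreconnected s) (hV : IsOpen V)
    (h1 : (s ∩ V).Nonempty) (h2 : (s \ closure V).Nonempty) :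
    (s ∩ frontier V).Nonempty := by
  by_contra h
  rw [not_nonempty_iff_eq_empty] at h
  have hcov : s ⊆ V ∪ (closure V)ᶜ := by
    intro y hy
    by_cases hyc : y ∈ closure V
    · by_cases hyV : y ∈ V
      · exact Or.inl hyV
      · have : y ∈ frontier V := by
          rw [hV.frontier_eq]; exact ⟨hyc, hyV⟩
        exact (eq_empty_iff_forall_notMem.mp h y ⟨hy, this⟩).elim
    · exact Or.inr hyc
  obtain ⟨c, hc⟩ := h2
  obtain ⟨y, _, hyV, hyc⟩ := hs V (closure V)ᶜ hV isClosed_closure.isOpen_compl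
    hcov h1 ⟨c, hc.1, hc.2⟩
  exact hyc (subset_closure hyV)

/-- An endpoint of a Peano continuum is not a local cut point. -/
theorem endpoint_not_localCutPoint {X : Type*} [MetricSpace X] [CompactSpace X]
    [ConnectedSpace X] [LocallyConnectedSpace X] (x : X)
    (hx : IsEndpoint x) : ¬ IsLocalCutPoint x := by
  rintro ⟨U, hUo, hxU, hUc, hUnc⟩
  rw [IsPreconnected] at hUnc
  push_neg at hUnc
  obtain ⟨u, v, hu, hv, hcov, hne1, hne2, hempty⟩ := hUnc
  have hUxo : IsOpen (U \ {x}) := hUo.sdiff isClosed_singleton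
  set A := (U \ {x}) ∩ u with hAdef
  set B := (U \ {x}) ∩ v with hBdef
  have hA : IsOpen A := hUxo.inter hu
  have hB : IsOpen B := hUxo.inter hv
  have hUn : U \ {x} = A ∪ B := by
    rw [hAdef, hBdef, ← inter_union_distrib_left]
    exact (inter_eq_left.mpr hcov).symm
  have hd : A ∩ B = ∅ := by
    rw [← hempty]
    ext y
    constructor
    · rintro ⟨⟨hy1, hy2⟩, ⟨_, hy3⟩⟩
      exact ⟨hy1, hy2, hy3⟩
    · rintro ⟨hy1, hy2, hy3⟩
      exact ⟨⟨hy1, hy2⟩, hy1, hy3⟩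
  obtain ⟨a, haU, hau⟩ := hne1
  obtain ⟨b, hbU, hbv⟩ := hne2
  have haA : a ∈ A := ⟨haU, hau⟩
  have hbB : b ∈ B := ⟨hbU, hbv⟩
  have hconnA : IsPreconnected (A ∪ {x}) :=
    sep_union_singleton_preconnected hUc.isPreconnected hxU hA hB hUn hd
  have hconnB : IsPreconnected (B ∪ {x}) :=
    sep_union_singleton_preconnected hUc.isPreconnected hxU hB hA
      (by rw [hUn, union_comm]) (by rw [inter_comm, hd])
  have hax : a ≠ x := haU.2
  have hbx : b ≠ x := hbU.2
  have hda : 0 < dist a x := dist_pos.mpr hax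
  have hdb : 0 < dist b x := dist_pos.mpr hbx
  set r := min (dist a x) (dist b x) with hrdef
  have hr : 0 < r := lt_min hda hdb
  obtain ⟨V, hVo, hxV, hVsub, p, hfr⟩ :=
    hx (Metric.ball x (r / 2)) (Metric.ball_mem_nhds x (by positivity))
  have hclV : closure V ⊆ Metric.closedBall x (r / 2) :=
    (closure_mono hVsub).trans Metric.closure_ball_subset_closedBall
  have haV : a ∉ closure V := by
    intro hc
    have := hclV hc
    rw [Metric.mem_closedBall] at this
    have : r ≤ r / 2 := le_trans (min_le_left _ _) this
    linarith
  have hbV : b ∉ closure V := by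
    intro hc
    have := hclV hc
    rw [Metric.mem_closedBall] at this
    have : r ≤ r / 2 := le_trans (min_le_right _ _) this
    linarith
  have hpA : p ∈ A ∪ {x} := by
    obtain ⟨q, hqs, hqf⟩ := preconnected_inter_frontier_nonempty hconnA hVo
      ⟨x, Or.inr rfl, hxV⟩ ⟨a, Or.inl haA, haV⟩
    rw [hfr] at hqf
    rwa [← hqf]
  have hpB : p ∈ B ∪ {x} := by
    obtain ⟨q, hqs, hqf⟩ := preconnected_inter_frontier_nonempty hconnB hVo
      ⟨x, Or.inr rfl, hxV⟩ ⟨b, Or.inl hbB, hbV⟩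
    rw [hfr] at hqf
    rwa [← hqf]
  have hpx : p ≠ x := by
    intro hpx
    have : x ∈ frontier V := by rw [hfr]; exact mem_singleton_iff.mpr hpx.symm
    exact (eq_empty_iff_forall_notMem.mp hVo.inter_frontier_eq x ⟨hxV, this⟩).elim
  have hpA' : p ∈ A := hpA.resolve_right hpx
  have hpB' : p ∈ B := hpB.resolve_right hpx
  exact eq_empty_iff_forall_notMem.mp hd p ⟨hpA', hpB'⟩
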